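/- Let q ≥ 1 be an integer and let A_{4_1}(L,M) = L²M⁴ + L(−M⁸ − 1 + M⁶ + M² + 2M⁴) + M⁴, viewed as a polynomial in L of degree 2 over ℤ[M]. Then each of the resultants res_L(A_{4_1}(L,M), M·L^{q} − 1) and res_L(A_{4_1}(L,M), L^{q} − M), taken with respect to L, is a nonzero polynomial in ℤ[M] whose leading coefficient and whose lowest-degree nonzero coefficient are each 1 or −1. -/

import Mathlib

/-!
Modulo `M²` the A-polynomial reduces to `-L` (its outer coefficients are `M⁴`, its middle one is
`-1 + O(M²)`), and the resultant of `-L`, taken in formal degree 2, with `u L^q - v` is `-u v`. For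
both binomials this is `-M`, so both resultants are `-M + O(M²)`. The coefficients of `A_{4_1}` are
palindromic of degree 8 while those of `M L^q - 1` and `L^q - M` are each other's reversals in
degree 1; reversing every entry of the Sylvester determinant therefore exchanges the two
resultants, and the top coefficients of each are the bottom ones of the other.
-/


open Polynomial

/-- The Sylvester matrix of two polynomials `f` and `g`, of size
`(g.natDegree + f.natDegree) × (g.natDegree + f.natDegree)`: the first `g.natDegree` rows
carry the coefficients of `f` (from the leading coefficient down), shifted, and the remaining
`f.natDegree` rows carry the coefficients of `g`. -/
noncomputable def sylvesterMatrix {R : Type*} [CommRing R] (f g : R[X]) :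
    Matrix (Fin (g.natDegree + f.natDegree)) (Fin (g.natDegree + f.natDegree)) R :=
  fun i j =>
    if (i : ℕ) < g.natDegree then
      (if (i : ℕ) ≤ (j : ℕ) ∧ (j : ℕ) ≤ (i : ℕ) + f.natDegree then
        f.coeff (f.natDegree + (i : ℕ) - (j : ℕ))
      else 0)
    else
      (if (i : ℕ) - g.natDegree ≤ (j : ℕ) ∧ (j : ℕ) ≤ (i : ℕ) - g.natDegree + g.natDegree then
        g.coeff (g.natDegree + ((i : ℕ) - g.natDegree) - (j : ℕ))
      else 0)

/-- The resultant `res_x(f, g)` of two polynomials, i.e. the determinant of their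
Sylvester matrix. -/
noncomputable def resultant {R : Type*} [CommRing R] (f g : R[X]) : R :=
  (sylvesterMatrix f g).det

/-- The A-polynomial of the figure-eight knot, as a polynomial in `L` over `ℤ[M]`. -/
noncomputable def A41poly : Polynomial (Polynomial ℤ) :=
  Polynomial.C (Polynomial.X ^ 4) * Polynomial.X ^ 2 +
    Polynomial.C (-Polynomial.X ^ 8 - 1 + Polynomial.X ^ 6 + Polynomial.X ^ 2 +
      2 * Polynomial.X ^ 4) * Polynomial.X +
    Polynomial.C (Polynomial.X ^ 4)

namespace Polynomial

section Semiring

variable {R : Type*} [Semiring R]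

lemma sylvester_apply (f g : R[X]) (m n : ℕ) (i j : Fin (m + n)) :
    sylvester f g m n i j =
      if (j : ℕ) < m then (if (j : ℕ) ≤ i ∧ (i : ℕ) ≤ j + n then g.coeff (i - j) else 0)
      else (if (j : ℕ) - m ≤ i ∧ (i : ℕ) ≤ j then f.coeff (i - (j - m)) else 0) := by
  induction j using Fin.addCases <;> simp [sylvester, add_comm]

lemma trailingCoeff_eq_coeff_one {p : R[X]} (h0 : p.coeff 0 = 0) (h1 : p.coeff 1 ≠ 0) :
    p.trailingCoeff = p.coeff 1 := by
  have hp : p ≠ 0 := fun hp => h1 (by simp [hp])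
  have : p.natTrailingDegree = 1 := le_antisymm (natTrailingDegree_le_of_ne_zero h1)
    (le_natTrailingDegree hp fun k hk => by rw [Nat.lt_one_iff.mp hk, h0])
  rw [trailingCoeff, this]

lemma leadingCoeff_eq_coeff_of_natDegree_le_succ {p : R[X]} {N : ℕ} (hp : p.natDegree ≤ N + 1)
    (h0 : p.coeff (N + 1) = 0) (h1 : p.coeff N ≠ 0) : p.leadingCoeff = p.coeff N := by
  have : p.natDegree = N := natDegree_eq_of_le_of_coeff_ne_zero
    (natDegree_le_iff_coeff_eq_zero.mpr fun k hk => by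
      rcases (Nat.succ_le_of_lt hk).eq_or_lt with rfl | hk'
      · exact h0
      · exact coeff_eq_zero_of_natDegree_lt (hp.trans_lt hk')) h1
  rw [leadingCoeff, this]

end Semiring

variable {R : Type*} [CommRing R]

lemma natDegree_det_le {ι : Type*} [Fintype ι] [DecidableEq ι] (A : Matrix ι ι R[X])
    (d : ι → ℕ) (h : ∀ i j, (A i j).natDegree ≤ d j) : A.det.natDegree ≤ ∑ j, d j := by
  rw [Matrix.det_apply]
  refine natDegree_sum_le_of_forall_le _ _ fun σ _ => ?_
  rw [Units.smul_def]
  exact (natDegree_smul_le _ _).trans <| (natDegree_prod_le _ _).trans <|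
    Finset.sum_le_sum fun j _ => h _ j

lemma reflect_prod {ι : Type*} (s : Finset ι) (f : ι → R[X]) (d : ι → ℕ)
    (h : ∀ i ∈ s, (f i).natDegree ≤ d i) :
    (∏ i ∈ s, f i).reflect (∑ i ∈ s, d i) = ∏ i ∈ s, (f i).reflect (d i) := by
  classical
  induction s using Finset.induction with
  | empty => simp
  | insert a s ha ih =>
    have hs : ∀ i ∈ s, (f i).natDegree ≤ d i := fun i hi => h i (Finset.mem_insert_of_mem hi)
    rw [Finset.prod_insert ha, Finset.sum_insert ha, Finset.prod_insert ha,
      reflect_mul _ _ (h a (Finset.mem_insert_self a s))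
        ((natDegree_prod_le _ _).trans (Finset.sum_le_sum hs)), ih hs]

lemma reflect_det {ι : Type*} [Fintype ι] [DecidableEq ι] (A : Matrix ι ι R[X])
    (d : ι → ℕ) (h : ∀ i j, (A i j).natDegree ≤ d j) :
    A.det.reflect (∑ j, d j) = (Matrix.of fun i j => (A i j).reflect (d j)).det := by
  let ρ : R[X] →+ R[X] :=
    { toFun := reflect (∑ j, d j)
      map_zero' := reflect_zero
      map_add' := fun p q => reflect_add p q _ }
  change ρ A.det = _
  simp only [Matrix.det_apply, map_sum, Units.smul_def, map_zsmul, Matrix.of_apply]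
  exact Finset.sum_congr rfl fun σ _ => congrArg _ (reflect_prod _ _ _ fun j _ => h _ j)

def sylvesterColDegree {n : ℕ} (m d e : ℕ) (j : Fin (m + n)) : ℕ :=
  if (j : ℕ) < m then e else d

lemma sum_sylvesterColDegree (m n d e : ℕ) :
    ∑ j : Fin (m + n), sylvesterColDegree m d e j = m * e + n * d := by
  simp [sylvesterColDegree, Fin.sum_univ_add]

section CoeffDegree

variable {f g : R[X][X]} {m n d e : ℕ}

lemma natDegree_sylvester_le (hf : ∀ i, (f.coeff i).natDegree ≤ d)
    (hg : ∀ i, (g.coeff i).natDegree ≤ e) (i j : Fin (m + n)) :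
    (sylvester f g m n i j).natDegree ≤ sylvesterColDegree m d e j := by
  rw [sylvester_apply, sylvesterColDegree]
  split_ifs <;> simp [hf, hg]

lemma natDegree_resultant_le (hf : ∀ i, (f.coeff i).natDegree ≤ d)
    (hg : ∀ i, (g.coeff i).natDegree ≤ e) :
    (resultant f g m n).natDegree ≤ m * e + n * d := by
  rw [← sum_sylvesterColDegree]
  exact natDegree_det_le _ _ (natDegree_sylvester_le hf hg)

lemma reflect_resultant {f' g' : R[X][X]} (hf : ∀ i, (f.coeff i).natDegree ≤ d)
    (hg : ∀ i, (g.coeff i).natDegree ≤ e) (hf' : ∀ i, f'.coeff i = (f.coeff i).reflect d)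
    (hg' : ∀ i, g'.coeff i = (g.coeff i).reflect e) :
    (resultant f g m n).reflect (m * e + n * d) = resultant f' g' m n := by
  rw [resultant, ← sum_sylvesterColDegree, reflect_det _ _ (natDegree_sylvester_le hf hg),
    resultant]
  congr 1
  ext i j
  simp only [Matrix.of_apply, sylvester_apply, sylvesterColDegree, hf', hg']
  split_ifs <;> simp

end CoeffDegree

lemma resultant_C_mul_X_left (c : R) {g : R[X]} {n : ℕ} (hg : g.natDegree ≤ n) :
    resultant (C c * X) g 2 n = (-c) ^ n * g.coeff n * g.coeff 0 := by
  rw [resultant_C_mul_left, resultant_succ_left_deg _ _ _ _ natDegree_X_le,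
    ← pow_one (X : R[X]), resultant_X_pow_left _ _ _ hg, neg_pow]
  ring

lemma mk_span_X_sq_eq_mk_iff {p r : R[X]} :
    Ideal.Quotient.mk (Ideal.span {X ^ 2}) p = Ideal.Quotient.mk _ r ↔
      p.coeff 0 = r.coeff 0 ∧ p.coeff 1 = r.coeff 1 := by
  rw [Ideal.Quotient.eq, Ideal.mem_span_singleton, X_pow_dvd_iff]
  constructor
  · intro h
    exact ⟨sub_eq_zero.mp (by simpa using h 0 two_pos),
      sub_eq_zero.mp (by simpa using h 1 one_lt_two)⟩
  · rintro ⟨h0, h1⟩ d hd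
    interval_cases d <;> simp [h0, h1]

section Binomial

variable {q : ℕ}

lemma coeff_C_mul_X_pow_sub_C (hq : q ≠ 0) (a b : R) (i : ℕ) :
    (C a * X ^ q - C b).coeff i = if i = q then a else if i = 0 then -b else 0 := by
  simp only [coeff_sub, coeff_C_mul, coeff_X_pow, coeff_C]
  split_ifs <;> simp_all

lemma coeff_mul_coeff_zero_C_mul_X_pow_sub_C (hq : q ≠ 0) (a b : R) :
    (C a * X ^ q - C b).coeff q * (C a * X ^ q - C b).coeff 0 = -(a * b) := by
  rw [coeff_C_mul_X_pow_sub_C hq, coeff_C_mul_X_pow_sub_C hq, if_pos rfl, if_neg (Ne.symm hq),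
    if_pos rfl, mul_neg]

lemma natDegree_C_mul_X_pow_sub_C (hq : q ≠ 0) {a : R} (b : R) (ha : a ≠ 0) :
    (C a * X ^ q - C b).natDegree = q :=
  natDegree_eq_of_le_of_coeff_ne_zero (by compute_degree)
    (by rwa [coeff_C_mul_X_pow_sub_C hq, if_pos rfl])

lemma natDegree_coeff_C_mul_X_pow_sub_C_le (hq : q ≠ 0) {a b : R[X]} {d : ℕ}
    (ha : a.natDegree ≤ d) (hb : b.natDegree ≤ d) (i : ℕ) :
    ((C a * X ^ q - C b).coeff i).natDegree ≤ d := by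
  rw [coeff_C_mul_X_pow_sub_C hq]
  split_ifs <;> simp [ha, hb]

lemma reflect_coeff_C_mul_X_pow_sub_C (hq : q ≠ 0) (a b : R[X]) (d i : ℕ) :
    ((C a * X ^ q - C b).coeff i).reflect d =
      (C (a.reflect d) * X ^ q - C (b.reflect d)).coeff i := by
  rw [coeff_C_mul_X_pow_sub_C hq, coeff_C_mul_X_pow_sub_C hq]
  split_ifs <;> simp [reflect_neg]

end Binomial

end Polynomial

theorem sylvesterMatrix_eq_transpose_submatrix_sylvester {R : Type*} [CommRing R] (f g : R[X]) :
    sylvesterMatrix f g = ((sylvester f g f.natDegree g.natDegree).submatrix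
      (Fin.revPerm.trans (finCongr (add_comm _ _)))
      (Fin.revPerm.trans (finCongr (add_comm _ _)))).transpose := by
  ext i j
  simp only [sylvesterMatrix, Matrix.transpose_apply, Matrix.submatrix_apply, sylvester_apply,
    Equiv.trans_apply, Fin.revPerm_apply, finCongr_apply, Fin.val_cast, Fin.val_rev]
  have hi := i.isLt
  have hj := j.isLt
  split_ifs <;> first | rfl | omega | (congr 1; omega)

theorem resultant_eq_polynomial_resultant {R : Type*} [CommRing R] (f g : R[X]) :
    _root_.resultant f g = Polynomial.resultant f g := by
  rw [_root_.resultant, Polynomial.resultant, sylvesterMatrix_eq_transpose_submatrix_sylvester,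
    Matrix.det_transpose, Matrix.det_submatrix_equiv_self]

section FigureEight

local notation "φ" => Ideal.Quotient.mk (Ideal.span {(X : ℤ[X]) ^ 2})

lemma coeff_A41poly (i : ℕ) : A41poly.coeff i =
    if i = 1 then -X ^ 8 - 1 + X ^ 6 + X ^ 2 + 2 * X ^ 4
    else if i = 0 ∨ i = 2 then X ^ 4 else 0 := by
  simp only [A41poly, coeff_add, coeff_C_mul, coeff_X_pow, coeff_C, coeff_X]
  rcases i with _ | _ | _ | i <;> simp

lemma natDegree_A41poly : A41poly.natDegree = 2 :=
  natDegree_eq_of_le_of_coeff_ne_zero (by unfold A41poly; compute_degree)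
    (by simp [coeff_A41poly])

lemma natDegree_coeff_A41poly_le (i : ℕ) : (A41poly.coeff i).natDegree ≤ 8 := by
  rw [coeff_A41poly]
  split_ifs
  · compute_degree
  all_goals simp

lemma reflect_coeff_A41poly (i : ℕ) : (A41poly.coeff i).reflect 8 = A41poly.coeff i := by
  rw [coeff_A41poly]
  split_ifs
  · rw [show (2 : ℤ[X]) = C 2 by simp]
    simp only [reflect_add, reflect_sub, reflect_neg, reflect_one, reflect_C_mul,
      reflect_monomial, revAt_le (show 8 ≤ 8 by norm_num), revAt_le (show 6 ≤ 8 by norm_num),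
      revAt_le (show 4 ≤ 8 by norm_num), revAt_le (show 2 ≤ 8 by norm_num)]
    ring
  · rw [reflect_monomial, revAt_le (by norm_num)]
  · exact reflect_zero

lemma map_mk_A41poly : A41poly.map φ = C (-1) * X := by
  have h4 : φ (X ^ 4) = 0 := by
    rw [Ideal.Quotient.eq_zero_iff_mem, Ideal.mem_span_singleton]
    exact pow_dvd_pow _ (by norm_num)
  have hb : φ (-X ^ 8 - 1 + X ^ 6 + X ^ 2 + 2 * X ^ 4) = -1 := by
    rw [← map_one φ, ← map_neg, mk_span_X_sq_eq_mk_iff]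
    simp [coeff_X_pow, coeff_one]
  simp only [A41poly, Polynomial.map_add, Polynomial.map_mul, Polynomial.map_pow, map_C, map_X,
    h4, hb]
  simp

lemma coeff_zero_one_resultant_A41poly {g : ℤ[X][X]} {n : ℕ} (hg : g.natDegree ≤ n)
    (hgc : g.coeff n * g.coeff 0 = -X) :
    (resultant A41poly g 2 n).coeff 0 = 0 ∧ (resultant A41poly g 2 n).coeff 1 = -1 := by
  have : φ (resultant A41poly g 2 n) = φ (-X) := by
    rw [← resultant_map_map, map_mk_A41poly,
      resultant_C_mul_X_left _ (natDegree_map_le.trans hg), neg_neg, one_pow, one_mul,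
      coeff_map, coeff_map, ← map_mul, hgc]
  simpa using mk_span_X_sq_eq_mk_iff.mp this

lemma extreme_coeffs_resultant_A41poly {g g' : ℤ[X][X]} {n : ℕ} (hg : g.natDegree = n)
    (hg' : g'.natDegree = n) (hgc : g.coeff n * g.coeff 0 = -X)
    (hg'c : g'.coeff n * g'.coeff 0 = -X) (hdeg : ∀ i, (g.coeff i).natDegree ≤ 1)
    (hrefl : ∀ i, g'.coeff i = (g.coeff i).reflect 1) :
    _root_.resultant A41poly g ≠ 0 ∧ (_root_.resultant A41poly g).leadingCoeff = -1 ∧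
      (_root_.resultant A41poly g).trailingCoeff = -1 := by
  rw [resultant_eq_polynomial_resultant, natDegree_A41poly, hg]
  obtain ⟨hr0, hr1⟩ := coeff_zero_one_resultant_A41poly hg.le hgc
  obtain ⟨hr'0, hr'1⟩ := coeff_zero_one_resultant_A41poly hg'.le hg'c
  set r := resultant A41poly g 2 n
  have hr : r.reflect (n * 8 + 1 + 1) = resultant A41poly g' 2 n := by
    rw [show n * 8 + 1 + 1 = 2 * 1 + n * 8 by ring]
    exact reflect_resultant natDegree_coeff_A41poly_le hdeg
      (fun i => (reflect_coeff_A41poly i).symm) hrefl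
  have hdeg : r.natDegree ≤ n * 8 + 1 + 1 :=
    (natDegree_resultant_le natDegree_coeff_A41poly_le hdeg).trans_eq (by ring)
  have htop0 : r.coeff (n * 8 + 1 + 1) = 0 := by
    rw [← hr'0, ← hr, coeff_reflect, revAt_le (Nat.zero_le _), Nat.sub_zero]
  have htop1 : r.coeff (n * 8 + 1) = -1 := by
    rw [← hr'1, ← hr, coeff_reflect, revAt_le (by omega), Nat.add_sub_cancel]
  have hneg : (-1 : ℤ) ≠ 0 := by norm_num
  refine ⟨fun h => hneg (by rw [← hr1, h, coeff_zero]), ?_, ?_⟩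
  · rw [leadingCoeff_eq_coeff_of_natDegree_le_succ hdeg htop0 (htop1 ▸ hneg), htop1]
  · rw [trailingCoeff_eq_coeff_one hr0 (hr1 ▸ hneg), hr1]

end FigureEight

/-- Lemma 3.2 for the figure-eight knot: the extreme coefficients of
`res_L(A_{4_1}(L,M), M·L^q - 1)` and of `res_L(A_{4_1}(L,M), L^q - M)` are `±1`. -/
theorem resultant_A41_extreme_coeffs (q : ℕ) (hq : 1 ≤ q) :
    (_root_.resultant A41poly (Polynomial.C (Polynomial.X : Polynomial ℤ) * Polynomial.X ^ q - 1) ≠ 0 ∧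
      ((_root_.resultant A41poly
          (Polynomial.C (Polynomial.X : Polynomial ℤ) * Polynomial.X ^ q - 1)).leadingCoeff = 1 ∨
        (_root_.resultant A41poly
          (Polynomial.C (Polynomial.X : Polynomial ℤ) * Polynomial.X ^ q - 1)).leadingCoeff = -1) ∧
      ((_root_.resultant A41poly
          (Polynomial.C (Polynomial.X : Polynomial ℤ) * Polynomial.X ^ q - 1)).trailingCoeff = 1 ∨
        (_root_.resultant A41poly
          (Polynomial.C (Polynomial.X : Polynomial ℤ) * Polynomial.X ^ q - 1)).trailingCoeff = -1)) ∧
    (_root_.resultant A41poly (Polynomial.X ^ q - Polynomial.C (Polynomial.X : Polynomial ℤ)) ≠ 0 ∧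
      ((_root_.resultant A41poly
          (Polynomial.X ^ q - Polynomial.C (Polynomial.X : Polynomial ℤ))).leadingCoeff = 1 ∨
        (_root_.resultant A41poly
          (Polynomial.X ^ q - Polynomial.C (Polynomial.X : Polynomial ℤ))).leadingCoeff = -1) ∧
      ((_root_.resultant A41poly
          (Polynomial.X ^ q - Polynomial.C (Polynomial.X : Polynomial ℤ))).trailingCoeff = 1 ∨
        (_root_.resultant A41poly
          (Polynomial.X ^ q - Polynomial.C (Polynomial.X : Polynomial ℤ))).trailingCoeff = -1)) := by
  have hq' : q ≠ 0 := Nat.one_le_iff_ne_zero.mp hq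
  have hg : (C X * X ^ q - 1 : ℤ[X][X]) = C X * X ^ q - C 1 := by rw [C_1]
  have hg' : (X ^ q - C X : ℤ[X][X]) = C 1 * X ^ q - C X := by rw [C_1, one_mul]
  have hdeg := natDegree_C_mul_X_pow_sub_C hq' (1 : ℤ[X]) X_ne_zero
  have hdeg' := natDegree_C_mul_X_pow_sub_C hq' (X : ℤ[X]) one_ne_zero
  have hprod := coeff_mul_coeff_zero_C_mul_X_pow_sub_C (R := ℤ[X]) hq'
  have h1 : (1 : ℤ[X]).natDegree ≤ 1 := natDegree_one.trans_le zero_le_one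
  have hcoeff := natDegree_coeff_C_mul_X_pow_sub_C_le hq' natDegree_X_le h1
  have hcoeff' := natDegree_coeff_C_mul_X_pow_sub_C_le hq' h1 natDegree_X_le
  obtain ⟨hne, hlc, htc⟩ := extreme_coeffs_resultant_A41poly hdeg hdeg'
    ((hprod _ _).trans (by ring)) ((hprod _ _).trans (by ring)) hcoeff
    fun i => by rw [reflect_coeff_C_mul_X_pow_sub_C hq', reflect_one_X, reflect_one, pow_one]
  obtain ⟨hne', hlc', htc'⟩ := extreme_coeffs_resultant_A41poly hdeg' hdeg
    ((hprod _ _).trans (by ring)) ((hprod _ _).trans (by ring)) hcoeff'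
    fun i => by rw [reflect_coeff_C_mul_X_pow_sub_C hq', reflect_one_X, reflect_one, pow_one]
  rw [hg, hg']
  exact ⟨⟨hne, .inr hlc, .inr htc⟩, ⟨hne', .inr hlc', .inr htc'⟩⟩
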